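/- Let p be an odd prime and A the F_p-subalgebra of F_p[x1,x2,y1,y2] generated by {x1x2, y1y2, x1y1, x2y2} ∪ {x1^{p−1−i}y2^i, x2^{p−1−i}y1^i : 0 ≤ i ≤ p−1}. Then every monomial x1^u x2^v y1^s y2^t with u+t ≡ v+s (mod p−1) lies in A. -/

import Mathlib

/-!
Pairing each of `x₁, y₂` with one of `x₂, y₁` writes a monomial `x₁^u x₂^v y₁^s y₂^t` with
`u + t = v + s` as a product of the quadratic generators `x₁x₂, y₁y₂, x₁y₁, x₂y₂`. In general the
excess of `u + t` over `v + s` (or conversely) is a multiple of `p - 1`, and it is split off as a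
product of the generators `x₁^(p-1-i) y₂^i` (resp. `x₂^(p-1-i) y₁^i`).
-/

open MvPolynomial

section CommMonoid

variable {M S : Type*} [CommMonoid M] [SetLike S M] [SubmonoidClass S M] {sub : S}

theorem pow_mul_pow_mem_of_dvd {x y : M} {n : ℕ} (hxy : ∀ i ≤ n, x ^ (n - i) * y ^ i ∈ sub)
    {i j : ℕ} (hdvd : n ∣ i + j) : x ^ i * y ^ j ∈ sub := by
  obtain ⟨k, hk⟩ := hdvd
  induction k generalizing i j with
  | zero =>
    obtain ⟨rfl, rfl⟩ : i = 0 ∧ j = 0 := by simpa using hk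
    simp
  | succ k ih =>
    rw [Nat.mul_succ] at hk
    obtain ⟨i', j', hi', hj', hsum⟩ : ∃ i' j', i' ≤ i ∧ j' ≤ j ∧ i' + j' = n :=
      ⟨min i n, n - min i n, by omega, by omega, by omega⟩
    obtain ⟨i₀, rfl⟩ : ∃ i₀, i = i' + i₀ := ⟨i - i', by omega⟩
    obtain ⟨j₀, rfl⟩ : ∃ j₀, j = j' + j₀ := ⟨j - j', by omega⟩
    have hfactor : x ^ (i' + i₀) * y ^ (j' + j₀) = (x ^ (n - j') * y ^ j') * (x ^ i₀ * y ^ j₀) := by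
      rw [show n - j' = i' by omega, pow_add, pow_add]
      ac_rfl
    rw [hfactor]
    exact mul_mem (hxy j' (by omega)) (ih (by omega))

variable {a b c d : M}

theorem pow_mul_pow_mul_pow_mul_pow_mem_of_add_eq (hab : a * b ∈ sub) (hcd : c * d ∈ sub)
    (hac : a * c ∈ sub) (hbd : b * d ∈ sub) {u v s t : ℕ} (h : u + t = v + s) :
    a ^ u * b ^ v * c ^ s * d ^ t ∈ sub := by
  rcases le_total u v with huv | hvu
  · obtain ⟨k, rfl⟩ := Nat.exists_eq_add_of_le huv
    obtain rfl : t = k + s := by omega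
    have hfactor : a ^ u * b ^ (u + k) * c ^ s * d ^ (k + s) =
        (a * b) ^ u * (b * d) ^ k * (c * d) ^ s := by
      simp only [mul_pow, pow_add]
      ac_rfl
    rw [hfactor]
    exact mul_mem (mul_mem (pow_mem hab _) (pow_mem hbd _)) (pow_mem hcd _)
  · obtain ⟨k, rfl⟩ := Nat.exists_eq_add_of_le hvu
    obtain rfl : s = k + t := by omega
    have hfactor : a ^ (v + k) * b ^ v * c ^ (k + t) * d ^ t =
        (a * b) ^ v * (a * c) ^ k * (c * d) ^ t := by
      simp only [mul_pow, pow_add]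
      ac_rfl
    rw [hfactor]
    exact mul_mem (mul_mem (pow_mem hab _) (pow_mem hac _)) (pow_mem hcd _)

theorem pow_mul_pow_mul_pow_mul_pow_mem_of_modEq (hab : a * b ∈ sub) (hcd : c * d ∈ sub)
    (hac : a * c ∈ sub) (hbd : b * d ∈ sub) {n : ℕ} (had : ∀ i ≤ n, a ^ (n - i) * d ^ i ∈ sub)
    (hbc : ∀ i ≤ n, b ^ (n - i) * c ^ i ∈ sub) {u v s t : ℕ} (h : u + t ≡ v + s [MOD n]) :
    a ^ u * b ^ v * c ^ s * d ^ t ∈ sub := by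
  wlog hle : v + s ≤ u + t generalizing a b c d u v s t
  · -- swapping `(a, d)` with `(b, c)` preserves the hypotheses
    have hswap := this (a := b) (b := a) (c := d) (d := c) (mul_comm a b ▸ hab)
      (mul_comm c d ▸ hcd) hbd hac hbc had h.symm (by omega)
    convert hswap using 1
    ac_rfl
  have hdvd : n ∣ u + t - (v + s) := (Nat.modEq_iff_dvd' hle).1 h.symm
  obtain ⟨i, j, hi, hj, hsum⟩ : ∃ i j, i ≤ u ∧ j ≤ t ∧ i + j = u + t - (v + s) :=
    ⟨min u (u + t - (v + s)), u + t - (v + s) - min u (u + t - (v + s)),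
      by omega, by omega, by omega⟩
  obtain ⟨u₀, rfl⟩ : ∃ u₀, u = i + u₀ := ⟨u - i, by omega⟩
  obtain ⟨t₀, rfl⟩ : ∃ t₀, t = j + t₀ := ⟨t - j, by omega⟩
  have hfactor : a ^ (i + u₀) * b ^ v * c ^ s * d ^ (j + t₀) =
      (a ^ i * d ^ j) * (a ^ u₀ * b ^ v * c ^ s * d ^ t₀) := by
    simp only [pow_add]
    ac_rfl
  rw [hfactor]
  exact mul_mem (pow_mul_pow_mem_of_dvd had (hsum ▸ hdvd))
    (pow_mul_pow_mul_pow_mul_pow_mem_of_add_eq hab hcd hac hbd (by omega))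

end CommMonoid

theorem stmt_16_general {p : ℕ} (u v s t : ℕ)
    (h : u + t ≡ v + s [MOD p - 1]) :
    (X 0 ^ u * X 1 ^ v * X 2 ^ s * X 3 ^ t : MvPolynomial (Fin 4) (ZMod p)) ∈
      Algebra.adjoin (ZMod p)
        ({X 0 * X 1, X 2 * X 3, X 0 * X 2, X 1 * X 3} ∪
          {f : MvPolynomial (Fin 4) (ZMod p) | ∃ i ≤ p - 1,
            f = X 0 ^ (p - 1 - i) * X 3 ^ i ∨ f = X 1 ^ (p - 1 - i) * X 2 ^ i}) :=
  pow_mul_pow_mul_pow_mul_pow_mem_of_modEq (M := MvPolynomial (Fin 4) (ZMod p))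
    (sub := Algebra.adjoin (ZMod p) _)
    (Algebra.subset_adjoin (by simp)) (Algebra.subset_adjoin (by simp))
    (Algebra.subset_adjoin (by simp)) (Algebra.subset_adjoin (by simp))
    (fun i hi => Algebra.subset_adjoin (Or.inr ⟨i, hi, Or.inl rfl⟩))
    (fun i hi => Algebra.subset_adjoin (Or.inr ⟨i, hi, Or.inr rfl⟩)) h

theorem stmt_16 {p : ℕ} (hp : p.Prime) (hodd : Odd p) (u v s t : ℕ)
    (h : u + t ≡ v + s [MOD p - 1]) :
    (X 0 ^ u * X 1 ^ v * X 2 ^ s * X 3 ^ t : MvPolynomial (Fin 4) (ZMod p)) ∈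
      Algebra.adjoin (ZMod p)
        ({X 0 * X 1, X 2 * X 3, X 0 * X 2, X 1 * X 3} ∪
          {f : MvPolynomial (Fin 4) (ZMod p) | ∃ i ≤ p - 1,
            f = X 0 ^ (p - 1 - i) * X 3 ^ i ∨ f = X 1 ^ (p - 1 - i) * X 2 ^ i}) :=
  stmt_16_general u v s t h
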